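/- arXiv:2505.07774 — 2 statements merged into one kernel-verified Lean document; each statement's English description precedes it below -/
import Mathlib

section
/- Let T be a tree with n vertices and maximum degree Δ, and let v₀ ∈ V(T) be a vertex with deg(v₀) = Δ. Suppose T has a support vertex v_ℓ ≠ v₀ with deg(v_ℓ) ≥ 3. Then there exists a tree T′ with n vertices and maximum degree Δ such that irr(T′) < irr(T). -/
open Finset
open scoped Classical

/-- The Albertson irregularity index: the sum over all edges of the absolute
difference of the endpoint degrees. -/
noncomputable def albertsonIndex {V : Type*} [Fintype V] (G : SimpleGraph V) : ℤ :=
  ∑ e ∈ G.edgeFinset,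
    Sym2.lift ⟨fun u v => |(G.degree u : ℤ) - (G.degree v : ℤ)|,
      fun _ _ => abs_sub_comm _ _⟩ e

/-! Root the tree at `v₀` and let `z` be a vertex of degree `D ≥ 3` as far from `v₀` as possible;
`z ≠ v₀` because `vℓ` qualifies. All vertices below `z` have degree at most `2`, so `z` has two
children `a` and `b`, and on the side of `z` of the edge `za` there is a leaf `w` (reached
through `b`). Replacing the edge `za` by `wa` gives a tree with the same maximum degree, since
only `z` loses a neighbour and only the leaf `w` gains one. The edge from `z` to its parent gains
at most `1`, every other edge at `z` and the edge at `w` lose at least `1`, and `za` is traded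
for `wa`; in total the Albertson index drops by at least `2D - 4 > 0`. -/

theorem sum_sum_eq_of_symmetric_of_eq_zero_off_pair {V M : Type*} [Fintype V] [AddCommGroup M]
    {f : V → V → M} (hf : ∀ u v, f u v = f v u) {z w : V} (hzw : z ≠ w)
    (h0 : ∀ u v, u ≠ z → u ≠ w → v ≠ z → v ≠ w → f u v = 0) :
    ∑ u, ∑ v, f u v = 2 • ∑ v, f z v + 2 • ∑ v, f w v - 2 • f z w - f z z - f w w := by
  have split (g : V → M) : ∑ u, g u = g z + g w + ∑ u ∈ (univ.erase z).erase w, g u := by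
    rw [← add_sum_erase _ _ (mem_univ z), ← add_sum_erase _ _ (mem_erase.2 ⟨hzw.symm, mem_univ w⟩),
      add_assoc]
  have hrow : ∀ u ∈ (univ.erase z).erase w, ∑ v, f u v = f z u + f w u := by
    intro u hu
    obtain ⟨huw, huz⟩ : u ≠ w ∧ u ≠ z := by simpa using hu
    rw [split, sum_eq_zero fun v hv => h0 u v huz huw (ne_of_mem_erase (mem_of_mem_erase hv))
      (ne_of_mem_erase hv), add_zero, hf u z, hf u w]
  rw [split fun u => ∑ v, f u v, sum_congr rfl hrow, sum_add_distrib, split (f z), split (f w),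
    hf w z]
  abel

namespace SimpleGraph

variable {V : Type*} {G : SimpleGraph V} {p q r u v w x y z a : V}

lemma Connected.exists_adj_dist_eq_add_one (hG : G.Connected) (hx : x ≠ r) :
    ∃ p, G.Adj x p ∧ G.dist r x = G.dist r p + 1 := by
  obtain ⟨W, hW⟩ := hG.exists_walk_length_eq_dist x r
  cases W with
  | nil => exact absurd rfl hx
  | @cons _ p _ h W' =>
    refine ⟨p, h, ?_⟩
    have hle := G.dist_le W'
    have htri := hG.dist_triangle (u := x) (v := p) (w := r)
    rw [dist_eq_one_iff_adj.2 h] at htri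
    rw [Walk.length_cons] at hW
    rw [dist_comm, G.dist_comm (u := r)]
    omega

lemma IsTree.eq_of_dist_eq_add_one (hT : G.IsTree) (hp : G.Adj x p)
    (hpd : G.dist r x = G.dist r p + 1) (hy : G.Adj x y) (hyd : G.dist r x = G.dist r y + 1) :
    p = y := by
  obtain ⟨P, hP, -⟩ := (hT.connected r x).exists_path_of_dist
  -- any neighbour of `x` closer to `r` lies on the path from `r` to `x`, hence precedes `x` on it
  have key : ∀ c, G.Adj x c → G.dist r x = G.dist r c + 1 → c = P.penultimate := by
    intro c hc hcd
    obtain ⟨Q, hQ, hQlen⟩ := (hT.connected r c).exists_path_of_dist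
    have hx : x ∉ Q.support := fun hx => by
      have := (G.dist_le (Q.takeUntil x hx)).trans (Q.length_takeUntil_le_length hx)
      omega
    exact hT.isAcyclic.eq_penultimate_of_adj_end hP hc
      (hT.isAcyclic.mem_support_of_ne_mem_support_of_adj_of_isPath hP hQ hc hx)
  exact (key p hp hpd).trans (key y hy hyd).symm

lemma IsTree.dist_eq_add_one_of_adj_of_ne (hT : G.IsTree) (hp : G.Adj x p)
    (hpd : G.dist r x = G.dist r p + 1) (hy : G.Adj x y) (hyp : y ≠ p) :
    G.dist r y = G.dist r x + 1 :=
  (hT.dist_eq_dist_add_one_of_adj r hy).resolve_left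
    fun h => hyp (hT.eq_of_dist_eq_add_one hp hpd hy h).symm

def rotateEdge (G : SimpleGraph V) (z a w : V) : SimpleGraph V :=
  G.deleteEdges {s(z, a)} ⊔ edge w a

lemma rotateEdge_adj_of_ne (hx : x ≠ z) (hxw : x ≠ w) (hy : y ≠ z) (hyw : y ≠ w) :
    (G.rotateEdge z a w).Adj x y ↔ G.Adj x y := by
  simp [rotateEdge, edge_adj, hx, hxw, hy, hyw]

lemma rotateEdge_adj_of_ne' (hx : x ≠ z) (hxw : x ≠ w) (hxa : x ≠ a) :
    (G.rotateEdge z a w).Adj x y ↔ G.Adj x y := by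
  simp [rotateEdge, edge_adj, hx, hxw, hxa]

lemma IsTree.rotateEdge (hT : G.IsTree) (hza : G.Adj z a)
    (hzw : (G.deleteEdges {s(z, a)}).Reachable z w) : (G.rotateEdge z a w).IsTree := by
  have hbridge : ¬(G.deleteEdges {s(z, a)}).Reachable z a :=
    isBridge_iff.1 (isAcyclic_iff_forall_adj_isBridge.1 hT.isAcyclic hza)
  have hwa : ¬(G.deleteEdges {s(z, a)}).Reachable w a := fun h => hbridge (hzw.trans h)
  have hle : G.deleteEdges {s(z, a)} ≤ G.rotateEdge z a w := le_sup_left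
  have hwa_ne : w ≠ a := by rintro rfl; exact hwa .rfl
  have hza' : (G.rotateEdge z a w).Reachable z a :=
    (hzw.mono hle).trans (Adj.reachable (Or.inr (by simp [edge_adj, hwa_ne])))
  have hadj : ∀ x y, G.Adj x y → (G.rotateEdge z a w).Reachable x y := by
    intro x y h
    by_cases he : s(x, y) = s(z, a)
    · rcases Sym2.eq_iff.1 he with ⟨rfl, rfl⟩ | ⟨rfl, rfl⟩
      exacts [hza', hza'.symm]
    · exact (hle (deleteEdges_adj.2 ⟨h, he⟩)).reachable
  refine ⟨(connected_iff _).2 ⟨fun x y => ?_, hT.connected.nonempty⟩,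
    (hT.isAcyclic.anti (deleteEdges_le _)).sup_edge_of_not_reachable hwa⟩
  obtain ⟨W⟩ := hT.connected.preconnected x y
  induction W with
  | nil => rfl
  | cons h _ ih => exact (hadj _ _ h).trans ih

section Finite

variable [Fintype V]

section AlbertsonTerm

variable (G)

noncomputable def albertsonTerm (u v : V) : ℤ :=
  if G.Adj u v then |(G.degree u : ℤ) - G.degree v| else 0

lemma albertsonTerm_comm (u v : V) : G.albertsonTerm u v = G.albertsonTerm v u := by
  simp only [albertsonTerm, G.adj_comm u v, abs_sub_comm]

@[simp] lemma albertsonTerm_self (u : V) : G.albertsonTerm u u = 0 := by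
  simp [albertsonTerm]

lemma sum_albertsonTerm (u : V) :
    ∑ v, G.albertsonTerm u v = ∑ v ∈ G.neighborFinset u, |(G.degree u : ℤ) - G.degree v| := by
  rw [neighborFinset_eq_filter, sum_filter]
  rfl

lemma sum_sum_albertsonTerm : ∑ u, ∑ v, G.albertsonTerm u v = 2 * albertsonIndex G := by
  set f : Sym2 V → ℤ := Sym2.lift ⟨fun u v => |(G.degree u : ℤ) - (G.degree v : ℤ)|,
      fun _ _ => abs_sub_comm _ _⟩
  calc ∑ u, ∑ v, G.albertsonTerm u v = ∑ d : G.Dart, f d.edge := by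
        rw [← Fintype.sum_prod_type']
        simp only [albertsonTerm]
        rw [← sum_filter]
        refine sum_bij' (fun p hp => ⟨p, (mem_filter.1 hp).2⟩) (fun d _ => d.toProd)
          (by simp) (by simp) (by simp) (by simp) fun p hp => rfl
    _ = ∑ e ∈ G.edgeFinset, ∑ d ∈ univ.filter (fun d : G.Dart => d.edge = e), f d.edge :=
        (sum_fiberwise_of_maps_to (fun d _ => mem_edgeFinset.2 d.edge_mem) _).symm
    _ = ∑ e ∈ G.edgeFinset, 2 * f e := by
        refine sum_congr rfl fun e he => ?_
        rw [sum_congr rfl fun d hd => congrArg f (mem_filter.1 hd).2, sum_const,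
          dart_edge_fiber_card G e (mem_edgeFinset.1 he), nsmul_eq_mul, Nat.cast_ofNat]
    _ = 2 * albertsonIndex G := by rw [← mul_sum]; rfl

end AlbertsonTerm

lemma neighborFinset_rotateEdge_left (hza : z ≠ a) (hzw : z ≠ w) :
    (G.rotateEdge z a w).neighborFinset z = (G.neighborFinset z).erase a := by
  ext y
  rw [mem_neighborFinset]
  simp [rotateEdge, edge_adj, hzw]
  grind

lemma neighborFinset_rotateEdge_right (hzw : z ≠ w) (hwa : w ≠ a) :
    (G.rotateEdge z a w).neighborFinset w = insert a (G.neighborFinset w) := by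
  ext y
  rw [mem_neighborFinset]
  simp [rotateEdge, edge_adj, hzw.symm, hwa]
  grind

lemma neighborFinset_rotateEdge_center (hza : z ≠ a) (hwa : w ≠ a) :
    (G.rotateEdge z a w).neighborFinset a = insert w ((G.neighborFinset a).erase z) := by
  ext y
  rw [mem_neighborFinset]
  simp [rotateEdge, edge_adj, hza.symm, hwa.symm]
  grind

lemma degree_rotateEdge_left (hza : G.Adj z a) (hzw : z ≠ w) :
    (G.rotateEdge z a w).degree z = G.degree z - 1 := by
  rw [← card_neighborFinset_eq_degree, neighborFinset_rotateEdge_left hza.ne hzw,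
    card_erase_of_mem (G.mem_neighborFinset _ _ |>.2 hza), card_neighborFinset_eq_degree]

lemma degree_rotateEdge_right (hzw : z ≠ w) (hwa : w ≠ a)
    (hwa' : ¬G.Adj w a) : (G.rotateEdge z a w).degree w = G.degree w + 1 := by
  rw [← card_neighborFinset_eq_degree, neighborFinset_rotateEdge_right hzw hwa,
    card_insert_of_notMem (by simpa using hwa'), card_neighborFinset_eq_degree]

lemma degree_rotateEdge_of_ne (hza : G.Adj z a) (hwa : w ≠ a) (hwa' : ¬G.Adj w a)
    (hxz : x ≠ z) (hxw : x ≠ w) : (G.rotateEdge z a w).degree x = G.degree x := by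
  by_cases hxa : x = a
  · subst hxa
    rw [← card_neighborFinset_eq_degree, neighborFinset_rotateEdge_center hza.ne hwa,
      card_insert_of_notMem (by simp [hwa'.imp G.adj_symm]),
      card_erase_add_one (by simpa using hza.symm), card_neighborFinset_eq_degree]
  · simp only [← card_neighborFinset_eq_degree]
    congr 1
    ext y
    simp [rotateEdge_adj_of_ne' hxz hxw hxa]

lemma maxDegree_rotateEdge (hza : G.Adj z a) (hzw : z ≠ w) (hwa : w ≠ a)
    (hwa' : ¬G.Adj w a) (hw : G.degree w < G.maxDegree) (hr : G.degree r = G.maxDegree)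
    (hrz : r ≠ z) (hrw : r ≠ w) : (G.rotateEdge z a w).maxDegree = G.maxDegree := by
  refine le_antisymm (maxDegree_le_of_forall_degree_le _ _ fun x => ?_) ?_
  · by_cases hxz : x = z
    · subst hxz
      rw [degree_rotateEdge_left hza hzw]
      exact (Nat.sub_le _ _).trans (G.degree_le_maxDegree _)
    by_cases hxw : x = w
    · subst hxw
      rw [degree_rotateEdge_right hzw hwa hwa']
      exact hw
    rw [degree_rotateEdge_of_ne hza hwa hwa' hxz hxw]
    exact G.degree_le_maxDegree x
  · rw [← hr, ← degree_rotateEdge_of_ne hza hwa hwa' hrz hrw]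
    exact degree_le_maxDegree _ _

lemma IsTree.exists_leaf_reachable_deleteEdges (hT : G.IsTree) (hzr : z ≠ r) (hza : G.Adj z a)
    {b : V} (hzb : G.Adj z b) (hba : b ≠ a)
    (hb : G.dist r b = G.dist r z + 1) :
    ∃ w q, (G.deleteEdges {s(z, a)}).Reachable z w ∧ w ≠ a ∧ ¬G.Adj w a ∧
      G.neighborFinset w = {q} ∧ 2 ≤ G.degree q := by
  set H := G.deleteEdges {s(z, a)}
  have hH {x y : V} (hxy : G.Adj x y) (hx : x ≠ z) (hxa : x ≠ a) : H.Adj x y :=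
    deleteEdges_adj.2 ⟨hxy, by simp [hx, hxa]⟩
  have hbridge : ¬H.Reachable z a :=
    isBridge_iff.1 (isAcyclic_iff_forall_adj_isBridge.1 hT.isAcyclic hza)
  have hzb' : H.Reachable z b := (hH hzb.symm hzb.ne.symm hba).reachable.symm
  -- a neighbour of `w` other than its parent would be farther from `r` and still reachable from `z`
  obtain ⟨w, hw, hmax⟩ := exists_max_image (univ.filter (H.Reachable z)) (G.dist r)
    ⟨b, mem_filter.2 ⟨mem_univ _, hzb'⟩⟩
  simp only [mem_filter, mem_univ, true_and] at hw hmax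
  have hz := hT.connected.pos_dist_of_ne hzr.symm
  have hbw := hmax b hzb'
  have hwz : w ≠ z := by rintro rfl; omega
  have hwa : w ≠ a := by rintro rfl; exact hbridge hw
  obtain ⟨q, hwq, hqd⟩ := hT.connected.exists_adj_dist_eq_add_one (x := w) (r := r)
    (by rintro rfl; rw [dist_self] at hbw; omega)
  have hleaf : G.neighborFinset w = {q} := by
    refine eq_singleton_iff_unique_mem.2 ⟨(G.mem_neighborFinset _ _).2 hwq, fun y hy => ?_⟩
    by_contra hyq
    have hy := (G.mem_neighborFinset _ _).1 hy
    have := hT.dist_eq_add_one_of_adj_of_ne hwq hqd hy hyq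
    have := hmax y (hw.trans (hH hy hwz hwa).reachable)
    omega
  obtain ⟨q', hqq', hq'd⟩ := hT.connected.exists_adj_dist_eq_add_one (x := q) (r := r)
    (by rintro rfl; rw [dist_self] at hqd; omega)
  refine ⟨w, q, hw, hwa, fun h => hbridge (hw.trans (hH h hwz hwa).reachable), hleaf, ?_⟩
  calc 2 = #{w, q'} := (card_pair (by rintro rfl; omega)).symm
    _ ≤ G.degree q := by
      rw [← card_neighborFinset_eq_degree]
      exact card_le_card (by simp [insert_subset_iff, hwq.symm, hqq'])

lemma albertsonTerm_rotateEdge_of_ne (hza : G.Adj z a) (hwa : w ≠ a) (hwa' : ¬G.Adj w a)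
    (huz : u ≠ z) (huw : u ≠ w) (hvz : v ≠ z) (hvw : v ≠ w) :
    (G.rotateEdge z a w).albertsonTerm u v = G.albertsonTerm u v := by
  simp only [albertsonTerm, rotateEdge_adj_of_ne huz huw hvz hvw,
    degree_rotateEdge_of_ne hza hwa hwa' huz huw, degree_rotateEdge_of_ne hza hwa hwa' hvz hvw]

lemma sum_albertsonTerm_rotateEdge_left_sub_le (hza : G.Adj z a) (hwa : w ≠ a)
    (hwa' : ¬G.Adj w a) (hdw : G.degree w = 1) (hzp : G.Adj z p) (hpa : p ≠ a)
    (hsmall : ∀ v, G.Adj z v → v ≠ p → G.degree v ≤ 2) (hz : 3 ≤ G.degree z) :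
    ∑ v, (G.rotateEdge z a w).albertsonTerm z v - ∑ v, G.albertsonTerm z v ≤
      3 - 2 * G.degree z + G.degree a - if G.Adj z w then 1 else 0 := by
  have hzw : z ≠ w := by rintro rfl; omega
  have hda := hsmall a hza hpa.symm
  -- the edge to `p` gains at most `1`, every other edge at `z` loses `1`, the edge `zw` even `2`
  have hterm : ∀ v ∈ (G.neighborFinset z).erase a,
      |((G.rotateEdge z a w).degree z : ℤ) - (G.rotateEdge z a w).degree v| -
        |(G.degree z : ℤ) - G.degree v| ≤
      (if v = p then 2 else 0) - 1 - if v = w then 1 else 0 := by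
    intro v hv
    obtain ⟨hva, hzv⟩ : v ≠ a ∧ G.Adj z v := by simpa using hv
    rw [degree_rotateEdge_left hza hzw]
    by_cases hvw : v = w
    · subst hvw
      rw [degree_rotateEdge_right hzw hwa hwa', hdw, if_pos rfl, abs_eq_max_neg, abs_eq_max_neg]
      split_ifs <;> omega
    rw [degree_rotateEdge_of_ne hza hwa hwa' hzv.ne.symm hvw, if_neg hvw,
      abs_eq_max_neg, abs_eq_max_neg]
    by_cases hvp : v = p
    · rw [if_pos hvp]; omega
    · have := hsmall v hzv hvp
      rw [if_neg hvp]; omega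
  have hp : p ∈ (G.neighborFinset z).erase a := by simpa [hpa] using hzp
  have hw : (w ∈ (G.neighborFinset z).erase a) ↔ G.Adj z w := by simp [hwa]
  rw [sum_albertsonTerm, sum_albertsonTerm, neighborFinset_rotateEdge_left hza.ne hzw,
    ← add_sum_erase _ _ ((G.mem_neighborFinset _ _).2 hza)]
  have hsum := sum_le_sum hterm
  simp only [sum_sub_distrib, sum_ite_eq', hp, hw, if_true, sum_const, nsmul_eq_mul, mul_one,
    card_erase_of_mem ((G.mem_neighborFinset _ _).2 hza), card_neighborFinset_eq_degree] at hsum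
  rw [abs_of_nonneg (by omega)]
  push_cast [Nat.one_le_of_lt hz] at hsum ⊢
  linarith

lemma sum_albertsonTerm_rotateEdge_right_sub (hza : G.Adj z a) (hwa : w ≠ a)
    (hwa' : ¬G.Adj w a) (hw : G.neighborFinset w = {q}) (hq : 2 ≤ G.degree q)
    (hz : 3 ≤ G.degree z) (hda : G.degree a ≤ 2) :
    ∑ v, (G.rotateEdge z a w).albertsonTerm w v - ∑ v, G.albertsonTerm w v =
      1 - G.degree a - if G.Adj z w then 1 else 0 := by
  have hdw : G.degree w = 1 := by rw [← card_neighborFinset_eq_degree, hw, card_singleton]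
  have hzw : z ≠ w := by rintro rfl; omega
  have hadj : ∀ x, G.Adj w x ↔ x = q := fun x => by
    rw [← G.mem_neighborFinset, hw, mem_singleton]
  have hqw : q ≠ w := ((hadj q).2 rfl).ne.symm
  have hqa : q ≠ a := fun h => hwa' ((hadj a).2 h.symm)
  rw [sum_albertsonTerm, sum_albertsonTerm, neighborFinset_rotateEdge_right hzw hwa, hw,
    sum_insert (by simpa using hqa.symm), sum_singleton, sum_singleton,
    degree_rotateEdge_right hzw hwa hwa', hdw,
    degree_rotateEdge_of_ne hza hwa hwa' hza.ne.symm hwa.symm]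
  by_cases hqz : q = z
  · subst hqz
    rw [if_pos ((hadj _).2 rfl).symm, degree_rotateEdge_left hza hzw]
    simp only [abs_eq_max_neg]
    omega
  · rw [if_neg fun h => hqz ((hadj z).1 h.symm).symm, degree_rotateEdge_of_ne hza hwa hwa' hqz hqw]
    simp only [abs_eq_max_neg]
    omega

theorem albertsonIndex_rotateEdge_add_le (hza : G.Adj z a) (hwa : w ≠ a) (hwa' : ¬G.Adj w a)
    (hw : G.neighborFinset w = {q}) (hq : 2 ≤ G.degree q) (hzp : G.Adj z p) (hpa : p ≠ a)
    (hsmall : ∀ v, G.Adj z v → v ≠ p → G.degree v ≤ 2) (hz : 3 ≤ G.degree z) :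
    albertsonIndex (G.rotateEdge z a w) + 2 * G.degree z ≤ albertsonIndex G + 4 := by
  have hdw : G.degree w = 1 := by rw [← card_neighborFinset_eq_degree, hw, card_singleton]
  have hzw : z ≠ w := by rintro rfl; omega
  have hrowz := G.sum_albertsonTerm_rotateEdge_left_sub_le hza hwa hwa' hdw hzp hpa hsmall hz
  have hroww := G.sum_albertsonTerm_rotateEdge_right_sub hza hwa hwa' hw hq hz
    (hsmall a hza hpa.symm)
  have hzw' : (G.rotateEdge z a w).albertsonTerm z w - G.albertsonTerm z w =
      -2 * if G.Adj z w then 1 else 0 := by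
    have hadj : (G.rotateEdge z a w).Adj z w ↔ G.Adj z w := by
      rw [← mem_neighborFinset, neighborFinset_rotateEdge_left hza.ne hzw]
      simp [hwa]
    simp only [albertsonTerm, hadj, degree_rotateEdge_left hza hzw,
      degree_rotateEdge_right hzw hwa hwa', hdw]
    split_ifs
    · rw [abs_eq_max_neg, abs_eq_max_neg]; omega
    · simp
  have htotal := sum_sum_eq_of_symmetric_of_eq_zero_off_pair
    (f := fun u v => (G.rotateEdge z a w).albertsonTerm u v - G.albertsonTerm u v)
    (fun u v => by simp only [albertsonTerm_comm _ u v]) hzw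
    fun u v huz huw hvz hvw =>
      sub_eq_zero.2 (albertsonTerm_rotateEdge_of_ne hza hwa hwa' huz huw hvz hvw)
  simp only [sum_sub_distrib, sum_sum_albertsonTerm, albertsonTerm_self, two_nsmul,
    sub_zero] at htotal
  linarith

lemma IsTree.exists_farthest_of_three_le_degree (hT : G.IsTree) (hyr : y ≠ r)
    (hy : 3 ≤ G.degree y) :
    ∃ z p, z ≠ r ∧ 3 ≤ G.degree z ∧ G.Adj z p ∧
      ∀ v, G.Adj z v → v ≠ p → G.dist r v = G.dist r z + 1 ∧ G.degree v ≤ 2 := by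
  obtain ⟨z, hz, hzmax⟩ := exists_max_image (univ.filter fun x => 3 ≤ G.degree x) (G.dist r)
    ⟨y, by simpa using hy⟩
  simp only [mem_filter, mem_univ, true_and] at hz hzmax
  have hzr : z ≠ r := by
    rintro rfl
    have := hzmax y hy
    have := hT.connected.pos_dist_of_ne hyr.symm
    rw [dist_self] at *
    omega
  obtain ⟨p, hzp, hpd⟩ := hT.connected.exists_adj_dist_eq_add_one hzr
  refine ⟨z, p, hzr, hz, hzp, fun v hzv hvp => ?_⟩
  have hv := hT.dist_eq_add_one_of_adj_of_ne hzp hpd hzv hvp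
  refine ⟨hv, not_lt.1 fun h => ?_⟩
  have := hzmax v h
  omega

end Finite

end SimpleGraph

open SimpleGraph

theorem stmt8_general (n Δ : ℕ) (T : SimpleGraph (Fin n)) (hT : T.IsTree)
    (hΔ : T.maxDegree = Δ) (v₀ : Fin n) (hv₀ : T.degree v₀ = Δ)
    (vℓ : Fin n) (hne : vℓ ≠ v₀)
    (hdeg : 3 ≤ T.degree vℓ) :
    ∃ T' : SimpleGraph (Fin n), T'.IsTree ∧ T'.maxDegree = Δ ∧
      albertsonIndex T' < albertsonIndex T := by
  subst hΔ
  obtain ⟨z, p, hzr, hz, hzp, hchild⟩ := hT.exists_farthest_of_three_le_degree hne hdeg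
  obtain ⟨a, ha, b, hb, hab⟩ := one_lt_card.1 <| show 1 < #((T.neighborFinset z).erase p) by
    rw [card_erase_of_mem ((T.mem_neighborFinset _ _).2 hzp), card_neighborFinset_eq_degree]
    omega
  simp only [mem_erase, mem_neighborFinset] at ha hb
  obtain ⟨w, q, hzw, hwa, hwa', hw, hq⟩ :=
    hT.exists_leaf_reachable_deleteEdges hzr ha.2 hb.2 (Ne.symm hab) (hchild b hb.2 hb.1).1
  have hdw : T.degree w = 1 := by rw [← card_neighborFinset_eq_degree, hw, card_singleton]
  have hzΔ := T.degree_le_maxDegree z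
  refine ⟨T.rotateEdge z a w, hT.rotateEdge ha.2 hzw,
    maxDegree_rotateEdge ha.2 (by rintro rfl; omega) hwa hwa' (by omega) hv₀ hzr.symm
      (by rintro rfl; omega), ?_⟩
  have := albertsonIndex_rotateEdge_add_le ha.2 hwa hwa' hw hq hzp ha.1.symm
    (fun v hzv hvp => (hchild v hzv hvp).2) hz
  omega

/-- If a tree `T` with `n` vertices and maximum degree `Δ` (attained at `v₀`) has
a support vertex `vℓ ≠ v₀` of degree at least 3, then there exists a tree `T'`
with `n` vertices and maximum degree `Δ` with strictly smaller Albertson index. -/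
theorem stmt8 (n Δ : ℕ) (T : SimpleGraph (Fin n)) (hT : T.IsTree)
    (hΔ : T.maxDegree = Δ) (v₀ : Fin n) (hv₀ : T.degree v₀ = Δ)
    (vℓ : Fin n) (hne : vℓ ≠ v₀)
    (hsupp : ∃ u : Fin n, T.Adj vℓ u ∧ T.degree u = 1)
    (hdeg : 3 ≤ T.degree vℓ) :
    ∃ T' : SimpleGraph (Fin n), T'.IsTree ∧ T'.maxDegree = Δ ∧
      albertsonIndex T' < albertsonIndex T :=
  stmt8_general n Δ T hT hΔ v₀ hv₀ vℓ hne hdeg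
end

section
/- Let T be a tree of order n ≥ 2. Then irr(T) ≤ (n−1)(n−2). -/
open Finset
open scoped Classical

/-- For a tree of order `n ≥ 2`, the Albertson index is at most `(n-1)(n-2)`. -/
theorem stmt15 {V : Type*} [Fintype V] (G : SimpleGraph V) (hT : G.IsTree)
    (n : ℕ) (hn : Fintype.card V = n) (h2 : 2 ≤ n) :
    albertsonIndex G ≤ ((n : ℤ) - 1) * ((n : ℤ) - 2) := by
  have hne : Nonempty V := by
    rw [← Fintype.card_pos_iff, hn]; omega
  have hcard : G.edgeFinset.card = n - 1 := by
    have := hT.card_edgeFinset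
    omega
  have hbound : ∀ e ∈ G.edgeFinset,
      Sym2.lift ⟨fun u v => |(G.degree u : ℤ) - (G.degree v : ℤ)|,
        fun _ _ => abs_sub_comm _ _⟩ e ≤ (n : ℤ) - 2 := by
    intro e he
    induction e using Sym2.ind with
    | _ u v =>
      simp only [Sym2.lift_mk]
      have hadj : G.Adj u v := by
        rwa [SimpleGraph.mem_edgeFinset, SimpleGraph.mem_edgeSet] at he
      have hdu1 : 1 ≤ G.degree u :=
        G.degree_pos_iff_exists_adj u |>.2 ⟨v, hadj⟩
      have hdv1 : 1 ≤ G.degree v :=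
        G.degree_pos_iff_exists_adj v |>.2 ⟨u, hadj.symm⟩
      have hduN : G.degree u < n := by rw [← hn]; exact G.degree_lt_card_verts u
      have hdvN : G.degree v < n := by rw [← hn]; exact G.degree_lt_card_verts v
      rw [abs_le]
      constructor <;> omega
  calc albertsonIndex G ≤ G.edgeFinset.card • ((n : ℤ) - 2) :=
        Finset.sum_le_card_nsmul _ _ _ hbound
    _ = ((G.edgeFinset.card : ℤ)) * ((n : ℤ) - 2) := by
        rw [nsmul_eq_mul]
    _ ≤ ((n : ℤ) - 1) * ((n : ℤ) - 2) := by
        rw [hcard]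
        have : ((n - 1 : ℕ) : ℤ) = (n : ℤ) - 1 := by omega
        rw [this]
end
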